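/- Let d ≥ 1, β > 0, and let M(v) = (β/(2π))^{d/2} exp(−β|v|²/2) be the Maxwellian density on ℝ^d. Let ω ∈ ℂ with Re ω > 0 and let φ : ℝ^d → ℝ be measurable with ∫_{ℝ^d} |k| φ(k)² dk < ∞. For v₀ ∈ ℝ^d define the complex d×d matrix A(v₀) with entries A_{ab}(v₀) = ∫_{ℝ^d} k_a k_b φ(k)² ( ∫_{ℝ^d} M(v₁) / (ω + i k·(v₁ − v₀)) dv₁ ) dk. Then for all compactly supported smooth g, h : ℝ^d → ℂ, one has | ∫_{ℝ^d} Σ_{a,b=1}^d conj(∂_a h(v₀)) · A_{ab}(v₀) · ∂_b g(v₀) dv₀ | ≤ e^{β/2} · ( ∫_{ℝ^d} |k| φ(k)² dk ) · ‖∇h‖_{L²(ℝ^d)} · ‖∇g‖_{L²(ℝ^d)}. -/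

import Mathlib

open MeasureTheory
open scoped ENNReal RealInnerProductSpace

/-- The Maxwellian density `M(v) = (β/(2π))^{d/2} exp(−β|v|²/2)` on `ℝ^d`. -/
noncomputable def maxwellian (d : ℕ) (β : ℝ) (v : EuclideanSpace ℝ (Fin d)) : ℝ :=
  (β / (2 * Real.pi)) ^ ((d : ℝ) / 2) * Real.exp (-β * ‖v‖ ^ 2 / 2)

/-- The matrix field `A(v₀)` with entries
`A_{ab}(v₀) = ∫ k_a k_b φ(k)² (∫ M(v₁)/(ω + i k·(v₁−v₀)) dv₁) dk`. -/
noncomputable def Amat (d : ℕ) (β : ℝ) (ω : ℂ) (φ : EuclideanSpace ℝ (Fin d) → ℝ)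
    (v₀ : EuclideanSpace ℝ (Fin d)) (a b : Fin d) : ℂ :=
  ∫ k : EuclideanSpace ℝ (Fin d),
    ((k a : ℝ) : ℂ) * ((k b : ℝ) : ℂ) * ((φ k : ℝ) : ℂ) ^ 2 *
      ∫ v₁, (maxwellian d β v₁ : ℂ) / (ω + Complex.I * ((⟪k, v₁ - v₀⟫ : ℝ) : ℂ))

open Set Complex Real

section Aux

theorem laplace (z : ℂ) (hz : 0 < z.re) : ∫ t in Ioi (0:ℝ), Complex.exp (-(z * t)) = z⁻¹ := by
  have hz0 : z ≠ 0 := fun h => by simp [h] at hz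
  have key := integral_Ioi_of_hasDerivAt_of_tendsto
    (f := fun t : ℝ => -z⁻¹ * Complex.exp (-(z * t)))
    (f' := fun t : ℝ => Complex.exp (-(z * t))) (a := 0) (m := 0)
    ?_ ?_ ?_ ?_
  · simpa using key
  · exact Continuous.continuousWithinAt (by continuity)
  · intro x hx
    have h1 : HasDerivAt (fun t : ℝ => -(z * (t:ℂ))) (-z) x := by
      have h0 := (((hasDerivAt_id x).ofReal_comp).const_mul z).neg
      simp only [id, Complex.ofReal_one, mul_one] at h0
      exact h0
    have h2 := (h1.cexp).const_mul (-z⁻¹)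
    convert h2 using 1
    · rfl
    · rw [mul_comm (Complex.exp _) (-z), ← mul_assoc, neg_mul_neg, inv_mul_cancel₀ hz0, one_mul]
  · apply Integrable.mono' (g := fun t : ℝ => Real.exp (-z.re * t))
    · exact (exp_neg_integrableOn_Ioi 0 hz)
    · exact (Continuous.aestronglyMeasurable (by continuity))
    · filter_upwards with t
      simp [Complex.norm_exp]
  · rw [tendsto_zero_iff_norm_tendsto_zero]
    have : (fun t : ℝ => ‖-z⁻¹ * Complex.exp (-(z*t))‖) = fun t => ‖z⁻¹‖ * Real.exp (-(z.re * t)) := by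
      ext t; simp [Complex.norm_exp]
    rw [this]
    rw [show (0:ℝ) = ‖z⁻¹‖ * 0 by ring]
    apply Filter.Tendsto.const_mul
    apply Real.tendsto_exp_atBot.comp
    exact Filter.tendsto_neg_atBot_iff.mpr (Filter.Tendsto.const_mul_atTop hz Filter.tendsto_id)

theorem maxwellian_continuous (d : ℕ) (β : ℝ) : Continuous (maxwellian d β) := by
  unfold maxwellian
  apply continuous_const.mul
  exact Real.continuous_exp.comp (by continuity)

theorem maxwellian_nonneg (d : ℕ) {β : ℝ} (hβ : 0 < β) (v : EuclideanSpace ℝ (Fin d)) :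
    0 ≤ maxwellian d β v := by
  unfold maxwellian; positivity

theorem maxwellian_integrable (d : ℕ) {β : ℝ} (hβ : 0 < β) :
    Integrable (maxwellian d β) := by
  unfold maxwellian
  apply Integrable.const_mul
  have h := GaussianFourier.integrable_cexp_neg_mul_sq_norm_add (V := EuclideanSpace ℝ (Fin d))
    (b := (β/2 : ℂ)) (by simpa using half_pos hβ) 0 0
  have := h.norm
  apply this.congr
  filter_upwards with v
  rw [Complex.norm_exp]
  congr 1
  simp [← Complex.ofReal_pow]
  ring

theorem inner_bound (d : ℕ) {β : ℝ} (hβ : 0 < β) {ω : ℂ} (hω : 0 < ω.re)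
    (v₀ k : EuclideanSpace ℝ (Fin d)) (hk : k ≠ 0) :
    ‖∫ v₁, (maxwellian d β v₁ : ℂ) / (ω + Complex.I * ((⟪k, v₁ - v₀⟫ : ℝ) : ℂ))‖
      ≤ Real.sqrt (Real.pi * β / 2) / ‖k‖ := by
  have hknorm : (0:ℝ) < ‖k‖ := norm_pos_iff.mpr hk
  let E := EuclideanSpace ℝ (Fin d)
  let z : E → ℂ := fun v₁ => ω + Complex.I * ((⟪k, v₁ - v₀⟫ : ℝ) : ℂ)
  have hzre : ∀ v₁, (z v₁).re = ω.re := by intro v₁; simp [z]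
  have hzpos : ∀ v₁, 0 < (z v₁).re := fun v₁ => by rw [hzre]; exact hω
  have hzcont : Continuous z := by
    apply continuous_const.add
    apply continuous_const.mul
    exact Complex.continuous_ofReal.comp (Continuous.inner continuous_const
      (continuous_id.sub continuous_const))
  have h1 : ∀ v₁ : E, (maxwellian d β v₁ : ℂ) / z v₁
      = ∫ t in Ioi (0:ℝ), (maxwellian d β v₁ : ℂ) * Complex.exp (-(z v₁ * t)) := by
    intro v₁
    rw [MeasureTheory.integral_const_mul, laplace _ (hzpos v₁), div_eq_mul_inv]
  have hprod : Integrable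
      (Function.uncurry fun (v₁ : E) (t : ℝ) => (maxwellian d β v₁ : ℂ) * Complex.exp (-(z v₁ * t)))
      (volume.prod (volume.restrict (Ioi (0:ℝ)))) := by
    apply Integrable.mono' (g := fun p : E × ℝ => maxwellian d β p.1 * Real.exp (-ω.re * p.2))
    · exact (maxwellian_integrable d hβ).mul_prod (exp_neg_integrableOn_Ioi 0 hω)
    · apply Continuous.aestronglyMeasurable
      apply Continuous.mul
      · exact Complex.continuous_ofReal.comp ((maxwellian_continuous d β).comp continuous_fst)
      · exact Complex.continuous_exp.comp
          (((hzcont.comp continuous_fst).mul (Complex.continuous_ofReal.comp continuous_snd)).neg)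
    · filter_upwards with p
      rw [Function.uncurry_apply_pair, norm_mul, Complex.norm_real, Real.norm_eq_abs,
        Complex.norm_exp, _root_.abs_of_nonneg (maxwellian_nonneg d hβ p.1)]
      apply le_of_eq
      congr 1
      simp [Complex.mul_re, hzre]
  have hswap := MeasureTheory.integral_integral_swap hprod
  have hb2 : (0:ℝ) < (((β:ℂ))/2).re := by
    simpa using half_pos hβ
  have hrw : ∀ (t : ℝ) (v₁ : E), (maxwellian d β v₁ : ℂ) * Complex.exp (-(z v₁ * t))
      = (((β/(2*Real.pi)) ^ ((d:ℝ)/2) : ℝ) : ℂ) *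
          Complex.exp (-(ω*t) + Complex.I*t*((⟪k,v₀⟫ : ℝ):ℂ)) *
          Complex.exp (-((β:ℂ)/2) * (‖v₁‖:ℂ)^2 + (-(Complex.I*(t:ℂ))) * ((⟪k,v₁⟫ : ℝ):ℂ)) := by
    intro t v₁
    unfold maxwellian
    rw [Complex.ofReal_mul, Complex.ofReal_exp, mul_assoc, ← Complex.exp_add,
      mul_assoc, ← Complex.exp_add]
    congr 2
    simp only [z, inner_sub_right]
    push_cast
    ring
  have hval : ∀ t : ℝ, (∫ v₁ : E, (maxwellian d β v₁ : ℂ) * Complex.exp (-(z v₁ * t)))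
      = (((β/(2*Real.pi)) ^ ((d:ℝ)/2) : ℝ) : ℂ) *
          Complex.exp (-(ω*t) + Complex.I*t*((⟪k,v₀⟫ : ℝ):ℂ)) *
          (((Real.pi:ℂ) / ((β:ℂ)/2)) ^ ((Module.finrank ℝ E : ℂ) / 2) *
            Complex.exp ((-(Complex.I*(t:ℂ)))^2 * (‖k‖:ℂ)^2 / (4 * ((β:ℂ)/2)))) := by
    intro t
    simp_rw [hrw t]
    rw [MeasureTheory.integral_const_mul]
    rw [GaussianFourier.integral_cexp_neg_mul_sq_norm_add hb2 (-(Complex.I*(t:ℂ))) k]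
  have h3 : ∀ t ∈ Ioi (0:ℝ), ‖∫ v₁ : E, (maxwellian d β v₁ : ℂ) * Complex.exp (-(z v₁ * t))‖
      ≤ Real.exp (-(‖k‖^2/(2*β)) * t^2) := by
    intro t ht
    rw [hval t, norm_mul, norm_mul, norm_mul]
    have hC : ‖(((β/(2*Real.pi)) ^ ((d:ℝ)/2) : ℝ) : ℂ)‖ = (β/(2*Real.pi)) ^ ((d:ℝ)/2) := by
      rw [Complex.norm_real, Real.norm_eq_abs]
      exact _root_.abs_of_nonneg (by positivity)
    have hphase : ‖Complex.exp (-(ω*t) + Complex.I*t*((⟪k,v₀⟫ : ℝ):ℂ))‖ ≤ 1 := by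
      rw [Complex.norm_exp, Real.exp_le_one_iff]
      have : (-(ω*(t:ℂ)) + Complex.I*t*((⟪k,v₀⟫ : ℝ):ℂ)).re = -(ω.re * t) := by
        simp [Complex.mul_re]
      rw [this]
      have := mem_Ioi.mp ht
      nlinarith [hω]
    have hpow : ‖((Real.pi:ℂ) / ((β:ℂ)/2)) ^ ((Module.finrank ℝ E : ℂ) / 2)‖
        = (2*Real.pi/β) ^ ((d:ℝ)/2) := by
      have h1 : ((Real.pi:ℂ) / ((β:ℂ)/2)) = ((2*Real.pi/β : ℝ) : ℂ) := by push_cast; ring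
      have h2 : ((Module.finrank ℝ E : ℂ) / 2) = (((d:ℝ)/2 : ℝ) : ℂ) := by
        rw [show Module.finrank ℝ E = d from finrank_euclideanSpace_fin]
        push_cast; ring
      rw [h1, h2, Complex.norm_cpow_eq_rpow_re_of_pos (by positivity),
        Complex.ofReal_re]
    have hgauss : ‖Complex.exp ((-(Complex.I*(t:ℂ)))^2 * (‖k‖:ℂ)^2 / (4 * ((β:ℂ)/2)))‖
        = Real.exp (-(‖k‖^2/(2*β)) * t^2) := by
      rw [Complex.norm_exp]
      congr 1
      have h2 : ((-(Complex.I*(t:ℂ)))^2 * (‖k‖:ℂ)^2 / (4 * ((β:ℂ)/2)))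
          = (((-(‖k‖^2/(2*β)) * t^2 : ℝ)) : ℂ) := by
        have : (-(Complex.I*(t:ℂ)))^2 = -((t:ℂ)^2) := by
          rw [neg_pow]
          rw [mul_pow, Complex.I_sq]
          ring
        rw [this]
        push_cast
        field_simp
        ring
      rw [h2, Complex.ofReal_re]
    rw [hC, hpow, hgauss]
    have hone : (β/(2*Real.pi)) ^ ((d:ℝ)/2) * ((2*Real.pi/β) ^ ((d:ℝ)/2)) = 1 := by
      rw [← Real.mul_rpow (by positivity) (by positivity)]
      rw [show (β/(2*Real.pi)) * (2*Real.pi/β) = 1 by field_simp]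
      exact Real.one_rpow _
    calc (β/(2*Real.pi)) ^ ((d:ℝ)/2) * ‖Complex.exp (-(ω*t) + Complex.I*t*((⟪k,v₀⟫ : ℝ):ℂ))‖ *
          ((2*Real.pi/β) ^ ((d:ℝ)/2) * Real.exp (-(‖k‖^2/(2*β)) * t^2))
        ≤ (β/(2*Real.pi)) ^ ((d:ℝ)/2) * 1 *
          ((2*Real.pi/β) ^ ((d:ℝ)/2) * Real.exp (-(‖k‖^2/(2*β)) * t^2)) := by
          apply mul_le_mul_of_nonneg_right _ (by positivity)
          exact mul_le_mul_of_nonneg_left hphase (by positivity)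
      _ = Real.exp (-(‖k‖^2/(2*β)) * t^2) := by
          rw [mul_one, ← mul_assoc, hone, one_mul]
  have hmain : (∫ v₁ : E, (maxwellian d β v₁ : ℂ) / (ω + Complex.I * ((⟪k, v₁ - v₀⟫ : ℝ) : ℂ)))
      = ∫ t in Ioi (0:ℝ), ∫ v₁ : E, (maxwellian d β v₁ : ℂ) * Complex.exp (-(z v₁ * t)) := by
    rw [← hswap]
    exact integral_congr_ae (Filter.Eventually.of_forall h1)
  rw [hmain]
  have hbpos : (0:ℝ) < ‖k‖^2/(2*β) := by positivity
  calc ‖∫ t in Ioi (0:ℝ), ∫ v₁ : E, (maxwellian d β v₁ : ℂ) * Complex.exp (-(z v₁ * t))‖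
      ≤ ∫ t in Ioi (0:ℝ), ‖∫ v₁ : E, (maxwellian d β v₁ : ℂ) * Complex.exp (-(z v₁ * t))‖ :=
        norm_integral_le_integral_norm _
    _ ≤ ∫ t in Ioi (0:ℝ), Real.exp (-(‖k‖^2/(2*β)) * t^2) := by
        apply integral_mono_of_nonneg (Filter.Eventually.of_forall fun t => norm_nonneg _)
          ((integrable_exp_neg_mul_sq hbpos).integrableOn)
        filter_upwards [ae_restrict_mem measurableSet_Ioi] with t ht
        exact h3 t ht
    _ = Real.sqrt (Real.pi / (‖k‖^2/(2*β))) / 2 := integral_gaussian_Ioi _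
    _ = Real.sqrt (Real.pi * β / 2) / ‖k‖ := by
        rw [show Real.pi / (‖k‖^2/(2*β)) = (Real.pi * β / 2) * (2/‖k‖)^2 by field_simp]
        rw [Real.sqrt_mul (by positivity), Real.sqrt_sq (by positivity)]
        field_simp

theorem euclid_decomp (d : ℕ) (k : EuclideanSpace ℝ (Fin d)) :
    ∑ a : Fin d, k a • EuclideanSpace.single a (1:ℝ) = k := by
  simpa [EuclideanSpace.basisFun_apply, EuclideanSpace.basisFun_repr] using
    (EuclideanSpace.basisFun (Fin d) ℝ).sum_repr k

theorem clm_apply_sum (d : ℕ) (u : EuclideanSpace ℝ (Fin d) →L[ℝ] ℂ)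
    (k : EuclideanSpace ℝ (Fin d)) :
    u k = ∑ a : Fin d, ((k a : ℝ) : ℂ) * u (EuclideanSpace.single a 1) := by
  conv_lhs => rw [← euclid_decomp d k]
  rw [map_sum]
  refine Finset.sum_congr rfl fun a _ => ?_
  rw [ContinuousLinearMap.map_smul, Complex.real_smul]

theorem coord_le (d : ℕ) (k : EuclideanSpace ℝ (Fin d)) (a : Fin d) : |k a| ≤ ‖k‖ := by
  have h := abs_real_inner_le_norm k (EuclideanSpace.single a (1:ℝ))
  rw [EuclideanSpace.norm_single] at h
  simpa [EuclideanSpace.inner_single_right] using h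

theorem coord_cont (d : ℕ) (a : Fin d) :
    Continuous (fun k : EuclideanSpace ℝ (Fin d) => k a) :=
  (EuclideanSpace.proj a (𝕜 := ℝ)).continuous

theorem sqrt_pibeta_le (β : ℝ) (hβ : 0 < β) : Real.sqrt (Real.pi * β / 2) ≤ Real.exp (β / 2) := by
  have h1 : β ≤ Real.exp (β - 1) := by linarith [Real.add_one_le_exp (β - 1)]
  have h2 : Real.exp β = Real.exp (β - 1) * Real.exp 1 := by rw [← Real.exp_add]; ring_nf
  have h3 : (2:ℝ) ≤ Real.exp 1 := by linarith [Real.add_one_le_exp 1]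
  have h4 : Real.pi * β / 2 ≤ Real.exp β := by
    nlinarith [Real.pi_le_four, Real.exp_pos (β - 1)]
  calc Real.sqrt (Real.pi * β / 2) ≤ Real.sqrt (Real.exp β) := Real.sqrt_le_sqrt h4
    _ = Real.exp (β / 2) := by
        rw [show Real.exp β = Real.exp (β/2) ^ 2 by rw [sq, ← Real.exp_add]; ring_nf]
        exact Real.sqrt_sq (Real.exp_pos _).le

theorem inn_aesm (d : ℕ) (β : ℝ) (ω : ℂ) (hω : 0 < ω.re) (v₀ : EuclideanSpace ℝ (Fin d)) :
    AEStronglyMeasurable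
      (fun k : EuclideanSpace ℝ (Fin d) =>
        ∫ v₁, (maxwellian d β v₁ : ℂ) / (ω + Complex.I * ((⟪k, v₁ - v₀⟫ : ℝ) : ℂ))) volume := by
  have hden : ∀ p : EuclideanSpace ℝ (Fin d) × EuclideanSpace ℝ (Fin d),
      (ω + Complex.I * ((⟪p.1, p.2 - v₀⟫ : ℝ) : ℂ)) ≠ 0 := by
    intro p h0
    have := congrArg Complex.re h0
    simp at this
    exact (ne_of_gt hω) this
  have hc : Continuous (fun p : EuclideanSpace ℝ (Fin d) × EuclideanSpace ℝ (Fin d) =>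
      (maxwellian d β p.2 : ℂ) / (ω + Complex.I * ((⟪p.1, p.2 - v₀⟫ : ℝ) : ℂ))) := by
    apply Continuous.div
    · exact Complex.continuous_ofReal.comp ((maxwellian_continuous d β).comp continuous_snd)
    · apply continuous_const.add
      apply continuous_const.mul
      exact Complex.continuous_ofReal.comp
        (Continuous.inner continuous_fst (continuous_snd.sub continuous_const))
    · exact hden
  exact hc.stronglyMeasurable.integral_prod_right'.aestronglyMeasurable

theorem S_bound (d : ℕ) {β : ℝ} (hβ : 0 < β) {ω : ℂ} (hω : 0 < ω.re)
    (φ : EuclideanSpace ℝ (Fin d) → ℝ) (hφ : Measurable φ)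
    (hint : Integrable (fun k : EuclideanSpace ℝ (Fin d) => ‖k‖ * (φ k) ^ 2))
    (v₀ : EuclideanSpace ℝ (Fin d)) (u w : EuclideanSpace ℝ (Fin d) →L[ℝ] ℂ) :
    ‖∑ a : Fin d, ∑ b : Fin d,
        (starRingEnd ℂ) (u (EuclideanSpace.single a 1)) * Amat d β ω φ v₀ a b *
          (w (EuclideanSpace.single b 1))‖
      ≤ Real.sqrt (Real.pi * β / 2) * (∫ k : EuclideanSpace ℝ (Fin d), ‖k‖ * (φ k)^2) *
        (‖u‖ * ‖w‖) := by
  set C0 := Real.sqrt (Real.pi * β / 2) with hC0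
  have hC0nn : 0 ≤ C0 := Real.sqrt_nonneg _
  set Inn : EuclideanSpace ℝ (Fin d) → ℂ :=
    fun k => ∫ v₁, (maxwellian d β v₁ : ℂ) / (ω + Complex.I * ((⟪k, v₁ - v₀⟫ : ℝ) : ℂ)) with hInn
  have hInn_meas : AEStronglyMeasurable Inn volume := inn_aesm d β ω hω v₀
  have hInn_bd : ∀ k, ‖k‖ * ‖Inn k‖ ≤ C0 := by
    intro k
    by_cases hk : k = 0
    · simp [hk]
      exact hC0nn
    · have hknorm : (0:ℝ) < ‖k‖ := norm_pos_iff.mpr hk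
      have h := inner_bound d hβ hω v₀ k hk
      calc ‖k‖ * ‖Inn k‖ ≤ ‖k‖ * (C0 / ‖k‖) :=
            mul_le_mul_of_nonneg_left h (norm_nonneg k)
        _ = C0 := by field_simp
  have hmeas_ab : ∀ a b : Fin d, AEStronglyMeasurable
      (fun k : EuclideanSpace ℝ (Fin d) =>
        ((k a : ℝ):ℂ) * ((k b : ℝ):ℂ) * ((φ k : ℝ):ℂ)^2 * Inn k) volume := by
    intro a b
    apply AEStronglyMeasurable.mul _ hInn_meas
    apply AEStronglyMeasurable.mul
    · apply AEStronglyMeasurable.mul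
      · exact (Complex.continuous_ofReal.comp (coord_cont d a)).aestronglyMeasurable
      · exact (Complex.continuous_ofReal.comp (coord_cont d b)).aestronglyMeasurable
    · exact ((Complex.measurable_ofReal.comp hφ).pow_const 2).aestronglyMeasurable
  have hbd_ab : ∀ (a b : Fin d) (k : EuclideanSpace ℝ (Fin d)),
      ‖((k a : ℝ):ℂ) * ((k b : ℝ):ℂ) * ((φ k : ℝ):ℂ)^2 * Inn k‖ ≤ C0 * (‖k‖ * (φ k)^2) := by
    intro a b k
    have h1 : ‖((k a : ℝ):ℂ) * ((k b : ℝ):ℂ) * ((φ k : ℝ):ℂ)^2 * Inn k‖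
        = |k a| * |k b| * (φ k)^2 * ‖Inn k‖ := by
      simp [norm_mul, Complex.norm_real, sq_abs]
    rw [h1]
    calc |k a| * |k b| * (φ k)^2 * ‖Inn k‖
        ≤ ‖k‖ * ‖k‖ * (φ k)^2 * ‖Inn k‖ := by
          gcongr
          · exact coord_le d k a
          · exact coord_le d k b
      _ = (‖k‖ * ‖Inn k‖) * (‖k‖ * (φ k)^2) := by ring
      _ ≤ C0 * (‖k‖ * (φ k)^2) := mul_le_mul_of_nonneg_right (hInn_bd k) (by positivity)
  have hint_ab : ∀ a b : Fin d, Integrable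
      (fun k : EuclideanSpace ℝ (Fin d) =>
        ((k a : ℝ):ℂ) * ((k b : ℝ):ℂ) * ((φ k : ℝ):ℂ)^2 * Inn k) volume := by
    intro a b
    apply Integrable.mono' (hint.const_mul C0) (hmeas_ab a b)
    exact Filter.Eventually.of_forall (hbd_ab a b)
  have hterm : ∀ a b : Fin d,
      (starRingEnd ℂ) (u (EuclideanSpace.single a 1)) * Amat d β ω φ v₀ a b *
        (w (EuclideanSpace.single b 1))
      = ∫ k : EuclideanSpace ℝ (Fin d), (starRingEnd ℂ) (u (EuclideanSpace.single a 1)) *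
          (((k a : ℝ):ℂ) * ((k b : ℝ):ℂ) * ((φ k : ℝ):ℂ)^2 * Inn k) *
          (w (EuclideanSpace.single b 1)) := by
    intro a b
    rw [MeasureTheory.integral_mul_const, MeasureTheory.integral_const_mul]
    rfl
  have halg : ∀ k : EuclideanSpace ℝ (Fin d),
      (∑ a : Fin d, ∑ b : Fin d, (starRingEnd ℂ) (u (EuclideanSpace.single a 1)) *
          (((k a : ℝ):ℂ) * ((k b : ℝ):ℂ) * ((φ k : ℝ):ℂ)^2 * Inn k) *
          (w (EuclideanSpace.single b 1)))
      = (starRingEnd ℂ) (u k) * (w k) * ((φ k : ℝ):ℂ)^2 * Inn k := by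
    intro k
    have step : (starRingEnd ℂ) (u k) * (w k) * ((φ k : ℝ):ℂ)^2 * Inn k
        = (∑ a : Fin d, (starRingEnd ℂ) (((k a : ℝ):ℂ) * u (EuclideanSpace.single a 1))) *
          (∑ b : Fin d, ((k b : ℝ):ℂ) * w (EuclideanSpace.single b 1)) *
          (((φ k : ℝ):ℂ)^2 * Inn k) := by
      rw [clm_apply_sum d u k, clm_apply_sum d w k, map_sum]
      ring
    rw [step, Finset.sum_mul_sum]
    rw [Finset.sum_mul]
    refine Finset.sum_congr rfl fun a _ => ?_
    rw [Finset.sum_mul]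
    refine Finset.sum_congr rfl fun b _ => ?_
    rw [map_mul, Complex.conj_ofReal]
    ring
  have hS : (∑ a : Fin d, ∑ b : Fin d,
        (starRingEnd ℂ) (u (EuclideanSpace.single a 1)) * Amat d β ω φ v₀ a b *
          (w (EuclideanSpace.single b 1)))
      = ∫ k : EuclideanSpace ℝ (Fin d),
          (starRingEnd ℂ) (u k) * (w k) * ((φ k : ℝ):ℂ)^2 * Inn k := by
    calc (∑ a : Fin d, ∑ b : Fin d,
          (starRingEnd ℂ) (u (EuclideanSpace.single a 1)) * Amat d β ω φ v₀ a b *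
            (w (EuclideanSpace.single b 1)))
        = ∑ a : Fin d, ∫ k : EuclideanSpace ℝ (Fin d), ∑ b : Fin d,
            (starRingEnd ℂ) (u (EuclideanSpace.single a 1)) *
            (((k a : ℝ):ℂ) * ((k b : ℝ):ℂ) * ((φ k : ℝ):ℂ)^2 * Inn k) *
            (w (EuclideanSpace.single b 1)) := by
          refine Finset.sum_congr rfl fun a _ => ?_
          simp_rw [hterm a]
          exact (integral_finset_sum _ fun b _ =>
            (((hint_ab a b).const_mul _).mul_const _)).symm
      _ = ∫ k : EuclideanSpace ℝ (Fin d), ∑ a : Fin d, ∑ b : Fin d,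
            (starRingEnd ℂ) (u (EuclideanSpace.single a 1)) *
            (((k a : ℝ):ℂ) * ((k b : ℝ):ℂ) * ((φ k : ℝ):ℂ)^2 * Inn k) *
            (w (EuclideanSpace.single b 1)) := by
          exact (integral_finset_sum _ fun a _ => integrable_finset_sum _ fun b _ =>
            (((hint_ab a b).const_mul _).mul_const _)).symm
      _ = ∫ k : EuclideanSpace ℝ (Fin d),
            (starRingEnd ℂ) (u k) * (w k) * ((φ k : ℝ):ℂ)^2 * Inn k :=
          integral_congr_ae (Filter.Eventually.of_forall halg)
  rw [hS]
  calc ‖∫ k : EuclideanSpace ℝ (Fin d),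
          (starRingEnd ℂ) (u k) * (w k) * ((φ k : ℝ):ℂ)^2 * Inn k‖
      ≤ ∫ k : EuclideanSpace ℝ (Fin d),
          ‖(starRingEnd ℂ) (u k) * (w k) * ((φ k : ℝ):ℂ)^2 * Inn k‖ :=
        norm_integral_le_integral_norm _
    _ ≤ ∫ k : EuclideanSpace ℝ (Fin d), (‖u‖ * ‖w‖ * C0) * (‖k‖ * (φ k)^2) := by
        apply integral_mono_of_nonneg (Filter.Eventually.of_forall fun k => norm_nonneg _)
          (hint.const_mul _)
        refine Filter.Eventually.of_forall fun k => ?_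
        dsimp only
        have h1 : ‖(starRingEnd ℂ) (u k) * (w k) * ((φ k : ℝ):ℂ)^2 * Inn k‖
            = ‖u k‖ * ‖w k‖ * (φ k)^2 * ‖Inn k‖ := by
          simp [norm_mul, Complex.norm_real, sq_abs, Complex.norm_conj]
        rw [h1]
        calc ‖u k‖ * ‖w k‖ * (φ k)^2 * ‖Inn k‖
            ≤ (‖u‖ * ‖k‖) * (‖w‖ * ‖k‖) * (φ k)^2 * ‖Inn k‖ := by
              gcongr
              · exact u.le_opNorm k
              · exact w.le_opNorm k
          _ = (‖u‖ * ‖w‖) * (‖k‖ * ‖Inn k‖) * (‖k‖ * (φ k)^2) := by ring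
          _ ≤ (‖u‖ * ‖w‖) * C0 * (‖k‖ * (φ k)^2) := by
              have h2 := hInn_bd k
              have h3 : (0:ℝ) ≤ ‖u‖ * ‖w‖ := by positivity
              have h4 : (0:ℝ) ≤ ‖k‖ * (φ k)^2 := by positivity
              exact mul_le_mul_of_nonneg_right
                (mul_le_mul_of_nonneg_left h2 h3) h4
          _ = (‖u‖ * ‖w‖ * C0) * (‖k‖ * (φ k)^2) := by ring
    _ = (‖u‖ * ‖w‖ * C0) * ∫ k : EuclideanSpace ℝ (Fin d), ‖k‖ * (φ k)^2 :=
        MeasureTheory.integral_const_mul _ _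
    _ = C0 * (∫ k : EuclideanSpace ℝ (Fin d), ‖k‖ * (φ k)^2) * (‖u‖ * ‖w‖) := by ring

end Aux

/-- Boundedness of the bilinear form of the 'hat operator' coefficient field:
`|∫ Σ_{a,b} conj(∂_a h) A_{ab} ∂_b g| ≤ e^{β/2} (∫ |k| φ(k)² dk) ‖∇h‖₂ ‖∇g‖₂`. -/
theorem stmt9 (d : ℕ) (hd : 1 ≤ d) (β : ℝ) (hβ : 0 < β) (ω : ℂ) (hω : 0 < ω.re)
    (φ : EuclideanSpace ℝ (Fin d) → ℝ) (hφ : Measurable φ)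
    (hint : Integrable (fun k : EuclideanSpace ℝ (Fin d) => ‖k‖ * (φ k) ^ 2))
    (g h : EuclideanSpace ℝ (Fin d) → ℂ)
    (hg : ContDiff ℝ (⊤ : ℕ∞) g) (hgs : HasCompactSupport g)
    (hh : ContDiff ℝ (⊤ : ℕ∞) h) (hhs : HasCompactSupport h) :
    ‖∫ v₀, ∑ a : Fin d, ∑ b : Fin d,
        (starRingEnd ℂ) (fderiv ℝ h v₀ (EuclideanSpace.single a 1)) *
          Amat d β ω φ v₀ a b *
          fderiv ℝ g v₀ (EuclideanSpace.single b 1)‖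
      ≤ Real.exp (β / 2) * (∫ k : EuclideanSpace ℝ (Fin d), ‖k‖ * (φ k) ^ 2) *
        (eLpNorm (fderiv ℝ h) 2 volume).toReal * (eLpNorm (fderiv ℝ g) 2 volume).toReal := by
  have hDh_cont : Continuous (fderiv ℝ h) := hh.continuous_fderiv (by simp)
  have hDg_cont : Continuous (fderiv ℝ g) := hg.continuous_fderiv (by simp)
  have hDh_supp : HasCompactSupport (fderiv ℝ h) := hhs.fderiv (𝕜 := ℝ)
  have hDg_supp : HasCompactSupport (fderiv ℝ g) := hgs.fderiv (𝕜 := ℝ)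
  set C0 := Real.sqrt (Real.pi * β / 2) with hC0
  have hC0nn : 0 ≤ C0 := Real.sqrt_nonneg _
  set Iφ := ∫ k : EuclideanSpace ℝ (Fin d), ‖k‖ * (φ k)^2 with hIφ
  have hIφnn : 0 ≤ Iφ := integral_nonneg fun k => by positivity
  have hq_int : Integrable (fun v₀ : EuclideanSpace ℝ (Fin d) =>
      ‖fderiv ℝ h v₀‖ * ‖fderiv ℝ g v₀‖) := by
    apply Continuous.integrable_of_hasCompactSupport
    · exact hDh_cont.norm.mul hDg_cont.norm
    · exact (hDh_supp.norm).mul_right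
  have hpt : ∀ v₀ : EuclideanSpace ℝ (Fin d),
      ‖∑ a : Fin d, ∑ b : Fin d,
        (starRingEnd ℂ) (fderiv ℝ h v₀ (EuclideanSpace.single a 1)) *
          Amat d β ω φ v₀ a b *
          fderiv ℝ g v₀ (EuclideanSpace.single b 1)‖
      ≤ C0 * Iφ * (‖fderiv ℝ h v₀‖ * ‖fderiv ℝ g v₀‖) :=
    fun v₀ => S_bound d hβ hω φ hφ hint v₀ (fderiv ℝ h v₀) (fderiv ℝ g v₀)
  have hmemh : MemLp (fderiv ℝ h) 2 volume :=
    hDh_cont.memLp_of_hasCompactSupport hDh_supp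
  have hmemg : MemLp (fderiv ℝ g) 2 volume :=
    hDg_cont.memLp_of_hasCompactSupport hDg_supp
  have hpq : Real.HolderConjugate 2 2 := Real.HolderConjugate.two_two
  have hmemh2 : MemLp (fun v => ‖fderiv ℝ h v‖) (ENNReal.ofReal 2) volume := by
    rw [ENNReal.ofReal_ofNat]; exact hmemh.norm
  have hmemg2 : MemLp (fun v => ‖fderiv ℝ g v‖) (ENNReal.ofReal 2) volume := by
    rw [ENNReal.ofReal_ofNat]; exact hmemg.norm
  have hH := integral_mul_le_Lp_mul_Lq_of_nonneg hpq
    (Filter.Eventually.of_forall fun v => norm_nonneg (fderiv ℝ h v))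
    (Filter.Eventually.of_forall fun v => norm_nonneg (fderiv ℝ g v))
    hmemh2 hmemg2
  have heLh : (eLpNorm (fderiv ℝ h) 2 volume).toReal
      = (∫ v, ‖fderiv ℝ h v‖ ^ (2:ℝ)) ^ ((1:ℝ)/2) := by
    rw [hmemh.eLpNorm_eq_integral_rpow_norm two_ne_zero ENNReal.ofNat_ne_top]
    rw [ENNReal.toReal_ofReal (by positivity)]
    norm_num
  have heLg : (eLpNorm (fderiv ℝ g) 2 volume).toReal
      = (∫ v, ‖fderiv ℝ g v‖ ^ (2:ℝ)) ^ ((1:ℝ)/2) := by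
    rw [hmemg.eLpNorm_eq_integral_rpow_norm two_ne_zero ENNReal.ofNat_ne_top]
    rw [ENNReal.toReal_ofReal (by positivity)]
    norm_num
  have hXnn : 0 ≤ (eLpNorm (fderiv ℝ h) 2 volume).toReal := ENNReal.toReal_nonneg
  have hYnn : 0 ≤ (eLpNorm (fderiv ℝ g) 2 volume).toReal := ENNReal.toReal_nonneg
  calc ‖∫ v₀, ∑ a : Fin d, ∑ b : Fin d,
        (starRingEnd ℂ) (fderiv ℝ h v₀ (EuclideanSpace.single a 1)) *
          Amat d β ω φ v₀ a b *
          fderiv ℝ g v₀ (EuclideanSpace.single b 1)‖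
      ≤ ∫ v₀, ‖∑ a : Fin d, ∑ b : Fin d,
        (starRingEnd ℂ) (fderiv ℝ h v₀ (EuclideanSpace.single a 1)) *
          Amat d β ω φ v₀ a b *
          fderiv ℝ g v₀ (EuclideanSpace.single b 1)‖ := norm_integral_le_integral_norm _
    _ ≤ ∫ v₀, C0 * Iφ * (‖fderiv ℝ h v₀‖ * ‖fderiv ℝ g v₀‖) :=
        integral_mono_of_nonneg (Filter.Eventually.of_forall fun _ => norm_nonneg _)
          (hq_int.const_mul _) (Filter.Eventually.of_forall hpt)
    _ = C0 * Iφ * ∫ v₀, ‖fderiv ℝ h v₀‖ * ‖fderiv ℝ g v₀‖ :=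
        MeasureTheory.integral_const_mul _ _
    _ ≤ C0 * Iφ * ((∫ v, ‖fderiv ℝ h v‖ ^ (2:ℝ)) ^ ((1:ℝ)/2) *
          (∫ v, ‖fderiv ℝ g v‖ ^ (2:ℝ)) ^ ((1:ℝ)/2)) := by
        apply mul_le_mul_of_nonneg_left _ (by positivity)
        exact hH
    _ = C0 * Iφ * ((eLpNorm (fderiv ℝ h) 2 volume).toReal *
          (eLpNorm (fderiv ℝ g) 2 volume).toReal) := by rw [heLh, heLg]
    _ ≤ Real.exp (β / 2) * Iφ * (eLpNorm (fderiv ℝ h) 2 volume).toReal *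
          (eLpNorm (fderiv ℝ g) 2 volume).toReal := by
        have hle := sqrt_pibeta_le β hβ
        calc C0 * Iφ * ((eLpNorm (fderiv ℝ h) 2 volume).toReal *
              (eLpNorm (fderiv ℝ g) 2 volume).toReal)
            = C0 * (Iφ * (eLpNorm (fderiv ℝ h) 2 volume).toReal *
              (eLpNorm (fderiv ℝ g) 2 volume).toReal) := by ring
          _ ≤ Real.exp (β / 2) * (Iφ * (eLpNorm (fderiv ℝ h) 2 volume).toReal *
              (eLpNorm (fderiv ℝ g) 2 volume).toReal) :=
              mul_le_mul_of_nonneg_right hle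
                (mul_nonneg (mul_nonneg hIφnn hXnn) hYnn)
          _ = Real.exp (β / 2) * Iφ * (eLpNorm (fderiv ℝ h) 2 volume).toReal *
              (eLpNorm (fderiv ℝ g) 2 volume).toReal := by ring
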